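/- In the Minsky-machine increment gadget, if v₁ < v₂ and v₂ < p (all natural numbers), then the delay sequence 1, p−v₂−1, 1, v₂−v₁−1, v₁+1 with the appropriate resets transforms (x₁ ↦ v₁, x₂ ↦ v₂, z ↦ 0) into (x₁ ↦ v₁+1, x₂ ↦ v₂, z ↦ 0), and the intermediate guards hold: z = 1 after the first delay; x₂ = p after the second; x₂ = 1 after the third; x₁ = p after the fourth (i.e., (p−v₂+v₁)+1+(v₂−v₁−1) = p); z = p after the fifth (i.e., (p−v₂−1)+1+(v₂−v₁−1)+(v₁+1) = p). -/
import Mathlib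


inductive Clk | x1 | x2 | z
deriving DecidableEq

def delay (ν : Clk → ℝ) (d : ℝ) : Clk → ℝ := fun c => ν c + d

def reset (ν : Clk → ℝ) (c0 : Clk) : Clk → ℝ := fun c => if c = c0 then 0 else ν c

/-- Increment gadget, lower branch (`v₁ < v₂ < p`): the delay sequence
`1, p−v₂−1, 1, v₂−v₁−1, v₁+1` with the prescribed resets passes all guards and
transforms `(v₁, v₂, 0)` into `(v₁+1, v₂, 0)`. -/
theorem increment_gadget_lower (v1 v2 p : ℕ) (h12 : v1 < v2) (h2p : v2 < p)
    (ν0 : Clk → ℝ) (hx1 : ν0 .x1 = v1) (hx2 : ν0 .x2 = v2) (hz : ν0 .z = 0) :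
    let a1 := delay ν0 1
    let b1 := reset a1 .z
    let a2 := delay b1 ((p : ℝ) - v2 - 1)
    let b2 := reset a2 .x2
    let a3 := delay b2 1
    let b3 := reset a3 .x2
    let a4 := delay b3 ((v2 : ℝ) - v1 - 1)
    let b4 := reset a4 .x1
    let a5 := delay b4 ((v1 : ℝ) + 1)
    let bf := reset a5 .z
    a1 .z = 1 ∧ a2 .x2 = p ∧ a3 .x2 = 1 ∧ a4 .x1 = p ∧ a5 .z = p ∧
    bf .x1 = (v1 : ℝ) + 1 ∧ bf .x2 = v2 ∧ bf .z = 0 := by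
  simp only [delay, reset, hx1, hx2, hz, if_true, reduceCtorEq, if_false]
  norm_num
  constructor <;> ring
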